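/- Let T > 0 and let α, β, λ, ε, μ > 0 satisfy λ ≥ α + εμ/(4β). Let χ : [0,T] → ℝ³ be differentiable, χ̇ₛ : [0,T] → ℝ³, h : ℝ³ × ℝ → ℝ differentiable, and V : [0,T] → ℝ differentiable with V(t) ≥ β‖χ'(t) − χ̇ₛ(t)‖², V'(t) ≤ −λ V(t), and ⟨∇_χ h(χ(t),t), χ̇ₛ(t)⟩ + ∂ₜh(χ(t),t) ≥ −α h(χ(t),t) + (1/ε)‖∇_χ h(χ(t),t)‖² for all t ∈ [0,T]. If h(χ(0),0) − (1/μ)V(0) ≥ 0, then β‖χ'(t) − χ̇ₛ(t)‖² ≤ μ·h(χ(t),t) for all t ∈ [0,T]. -/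

import Mathlib

/-!
Along the trajectory the barrier `B t = h (χ t, t) - V t / μ` satisfies `B' ≥ -α B`: by the
chain rule `B'` is `⟪∇h, χ'⟫ + ∂ₜh - V'/μ`; writing `χ' = χₛ + e`, the safety condition on
`χₛ` pays for `-α h` plus `‖∇h‖² / ε`, Young's inequality trades that surplus against
`⟪∇h, e⟫ ≥ -‖∇h‖² / ε - ε ‖e‖² / 4`, and `ε ‖e‖² / 4 ≤ ε V / (4β)` is absorbed by the decay
of `V` thanks to `λ ≥ α + εμ/(4β)`. Grönwall keeps `B ≥ 0`, i.e. `β ‖e‖² ≤ V ≤ μ h`.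
-/

open Set
open scoped RealInnerProductSpace

variable {E : Type*} [NormedAddCommGroup E] [InnerProductSpace ℝ E]

theorem hasDerivAt_comp_prodMk_self [CompleteSpace E] {χ : ℝ → E} {χ' : E}
    {h : E × ℝ → ℝ} {t : ℝ} (hχ : HasDerivAt χ χ' t) (hh : DifferentiableAt ℝ h (χ t, t)) :
    HasDerivAt (fun τ => h (χ τ, τ))
      (⟪gradient (fun x => h (x, t)) (χ t), χ'⟫ + deriv (fun s => h (χ t, s)) t) t := by
  set L := fderiv ℝ h (χ t, t)
  have hspace : HasFDerivAt (fun x => h (x, t)) (L.comp (.inl ℝ E ℝ)) (χ t) :=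
    hh.hasFDerivAt.comp (χ t) ((hasFDerivAt_id _).prodMk (hasFDerivAt_const t _))
  have htime : HasDerivAt (fun s => h (χ t, s)) (L (0, 1)) t :=
    hh.hasFDerivAt.comp_hasDerivAt t ((hasDerivAt_const t _).prodMk (hasDerivAt_id t))
  have hpath : HasDerivAt (fun τ => h (χ τ, τ)) (L (χ', 1)) t :=
    hh.hasFDerivAt.comp_hasDerivAt (f := fun τ => (χ τ, τ)) t (hχ.prodMk (hasDerivAt_id t))
  rw [gradient, hspace.fderiv, InnerProductSpace.toDual_symm_apply, htime.deriv,
    ContinuousLinearMap.comp_apply, ← map_add]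
  convert hpath using 2
  simp

theorem neg_young_le_real_inner {ε : ℝ} (hε : 0 < ε) (u v : E) :
    -((1 / ε) * ‖u‖ ^ 2 + ε / 4 * ‖v‖ ^ 2) ≤ ⟪u, v⟫ := by
  have hsq : 0 ≤ ‖u + (ε / 2) • v‖ ^ 2 := sq_nonneg _
  rw [norm_add_sq_real, inner_smul_right, norm_smul, Real.norm_of_nonneg (by positivity)] at hsq
  rw [← mul_le_mul_iff_right₀ hε]
  field_simp
  nlinarith

theorem nonneg_of_neg_mul_le_deriv {B B' : ℝ → ℝ} {α a b : ℝ}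
    (hB : ∀ t ∈ Icc a b, HasDerivAt B (B' t) t) (hB' : ∀ t ∈ Icc a b, -α * B t ≤ B' t)
    (ha : 0 ≤ B a) : ∀ t ∈ Icc a b, 0 ≤ B t := by
  intro t ht
  have := le_gronwallBound_of_liminf_deriv_right_le (f := fun t => -B t) (f' := fun t => -B' t)
    (δ := 0) (K := -α) (ε := 0) (fun t ht => (hB t ht).continuousAt.continuousWithinAt.neg)
    (fun t ht _ hr => (hB t (Ico_subset_Icc_self ht)).hasDerivWithinAt.neg.liminf_right_slope_le hr)
    (by simpa using ha) (fun t ht => by linarith [hB' t (Ico_subset_Icc_self ht)]) t ht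
  rw [gronwallBound_ε0_δ0] at this
  linarith

theorem neg_mul_barrier_le_rate {α β lam ε μ : ℝ} (hβ : 0 < β) (hε : 0 < ε) (hμ : 0 < μ)
    (hparam : lam ≥ α + ε * μ / (4 * β)) {G v w : E} {H D W W' : ℝ}
    (hW : W ≥ β * ‖v - w‖ ^ 2) (hW' : W' ≤ -lam * W)
    (hsafe : ⟪G, w⟫ + D ≥ -α * H + (1 / ε) * ‖G‖ ^ 2) :
    -α * (H - (1 / μ) * W) ≤ ⟪G, v⟫ + D - (1 / μ) * W' := by
  have hyoung := neg_young_le_real_inner hε G (v - w)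
  rw [inner_sub_right] at hyoung
  have herr : ε / 4 * ‖v - w‖ ^ 2 ≤ ε / (4 * β) * W :=
    calc ε / 4 * ‖v - w‖ ^ 2 = ε / (4 * β) * (β * ‖v - w‖ ^ 2) := by field_simp
      _ ≤ ε / (4 * β) * W := by gcongr
  have hmargin : (α + ε * μ / (4 * β)) * W ≤ lam * W :=
    mul_le_mul_of_nonneg_right hparam (le_trans (by positivity) hW)
  have hrate : -α * H - ε / (4 * β) * W ≤ ⟪G, v⟫ + D := by linarith
  have hscaled : μ * (-α * (H - (1 / μ) * W)) ≤ μ * (⟪G, v⟫ + D - (1 / μ) * W') := by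
    have := mul_le_mul_of_nonneg_left hrate hμ.le
    field_simp
    ring_nf at this hmargin ⊢
    linarith
  exact le_of_mul_le_mul_left hscaled hμ

theorem full_order_tracking_error_bound_general
    (T α β lam ε μ : ℝ)
    (hβ : 0 < β) (hε : 0 < ε) (hμ : 0 < μ)
    (hparam : lam ≥ α + ε * μ / (4 * β))
    (χ χs : ℝ → EuclideanSpace ℝ (Fin 3))
    (h : EuclideanSpace ℝ (Fin 3) × ℝ → ℝ)
    (V : ℝ → ℝ)
    (hχ : ∀ t ∈ Set.Icc (0 : ℝ) T, DifferentiableAt ℝ χ t)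
    (hh : Differentiable ℝ h)
    (hV : ∀ t ∈ Set.Icc (0 : ℝ) T, DifferentiableAt ℝ V t)
    (hVlb : ∀ t ∈ Set.Icc (0 : ℝ) T, V t ≥ β * ‖deriv χ t - χs t‖ ^ 2)
    (hVdecay : ∀ t ∈ Set.Icc (0 : ℝ) T, deriv V t ≤ -lam * V t)
    (hISSf : ∀ t ∈ Set.Icc (0 : ℝ) T,
      ⟪gradient (fun x => h (x, t)) (χ t), χs t⟫ + deriv (fun s => h (χ t, s)) t
        ≥ -α * h (χ t, t) + (1 / ε) * ‖gradient (fun x => h (x, t)) (χ t)‖ ^ 2)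
    (hB0 : h (χ 0, 0) - (1 / μ) * V 0 ≥ 0) :
    ∀ t ∈ Set.Icc (0 : ℝ) T, β * ‖deriv χ t - χs t‖ ^ 2 ≤ μ * h (χ t, t) := by
  have hbarrier : ∀ t ∈ Icc (0 : ℝ) T, 0 ≤ h (χ t, t) - (1 / μ) * V t :=
    nonneg_of_neg_mul_le_deriv
      (fun t ht => (hasDerivAt_comp_prodMk_self (hχ t ht).hasDerivAt (hh _)).sub
        ((hV t ht).hasDerivAt.const_mul (1 / μ)))
      (fun t ht => neg_mul_barrier_le_rate hβ hε hμ hparam (hVlb t ht) (hVdecay t ht) (hISSf t ht)) hB0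
  intro t ht
  have hV_le : V t ≤ μ * h (χ t, t) := by
    have := sub_nonneg.mp (hbarrier t ht)
    rwa [one_div_mul_eq_div, div_le_iff₀' hμ] at this
  exact (hVlb t ht).trans hV_le

/-- Corollary to Theorem 1 giving a quantitative safety margin: the squared
velocity tracking error of the full-order system is bounded by `(μ/β)` times the
current safety function value. -/
theorem full_order_tracking_error_bound
    (T α β lam ε μ : ℝ)
    (hT : 0 < T) (hα : 0 < α) (hβ : 0 < β) (hlam : 0 < lam) (hε : 0 < ε) (hμ : 0 < μ)
    (hparam : lam ≥ α + ε * μ / (4 * β))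
    (χ χs : ℝ → EuclideanSpace ℝ (Fin 3))
    (h : EuclideanSpace ℝ (Fin 3) × ℝ → ℝ)
    (V : ℝ → ℝ)
    (hχ : ∀ t ∈ Set.Icc (0 : ℝ) T, DifferentiableAt ℝ χ t)
    (hh : Differentiable ℝ h)
    (hV : ∀ t ∈ Set.Icc (0 : ℝ) T, DifferentiableAt ℝ V t)
    (hVlb : ∀ t ∈ Set.Icc (0 : ℝ) T, V t ≥ β * ‖deriv χ t - χs t‖ ^ 2)
    (hVdecay : ∀ t ∈ Set.Icc (0 : ℝ) T, deriv V t ≤ -lam * V t)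
    (hISSf : ∀ t ∈ Set.Icc (0 : ℝ) T,
      ⟪gradient (fun x => h (x, t)) (χ t), χs t⟫ + deriv (fun s => h (χ t, s)) t
        ≥ -α * h (χ t, t) + (1 / ε) * ‖gradient (fun x => h (x, t)) (χ t)‖ ^ 2)
    (hB0 : h (χ 0, 0) - (1 / μ) * V 0 ≥ 0) :
    ∀ t ∈ Set.Icc (0 : ℝ) T, β * ‖deriv χ t - χs t‖ ^ 2 ≤ μ * h (χ t, t) :=
  full_order_tracking_error_bound_general T α β lam ε μ hβ hε hμ hparam χ χs h V hχ hh hV hVlb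
    hVdecay hISSf hB0
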